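/- arXiv:2206.15092 — 2 statements merged into one kernel-verified Lean document; each statement's English description precedes it below -/
import Mathlib

section
/- Let G be a 3-connected graph. Then G is W_4-induced-minor-free if and only if G is chordal. -/
open SimpleGraph

/-! ## Common definitions -/

variable {V : Type} {W : Type}

/-- `G.HasInducedMinor H` : `H` is an induced minor of `G`, witnessed by an induced minor
model: pairwise disjoint nonempty connected branch sets `X w ⊆ V(G)` such that for distinct
`w₁ w₂` there is an edge of `G` between `X w₁` and `X w₂` iff `w₁w₂ ∈ E(H)`. -/
def SimpleGraph.HasInducedMinor (G : SimpleGraph V) (H : SimpleGraph W) : Prop :=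
  ∃ X : W → Set V,
    (∀ w, (G.induce (X w)).Connected) ∧
    (Pairwise fun w₁ w₂ => Disjoint (X w₁) (X w₂)) ∧
    ∀ w₁ w₂, w₁ ≠ w₂ →
      (H.Adj w₁ w₂ ↔ ∃ v₁ ∈ X w₁, ∃ v₂ ∈ X w₂, G.Adj v₁ v₂)

/-- `G.HasMinor H` : `H` is a minor of `G`, witnessed by a minor model. -/
def SimpleGraph.HasMinor (G : SimpleGraph V) (H : SimpleGraph W) : Prop :=
  ∃ X : W → Set V,
    (∀ w, (G.induce (X w)).Connected) ∧
    (Pairwise fun w₁ w₂ => Disjoint (X w₁) (X w₂)) ∧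
    ∀ w₁ w₂, H.Adj w₁ w₂ → ∃ v₁ ∈ X w₁, ∃ v₂ ∈ X w₂, G.Adj v₁ v₂

/-- `S` is a `u,v`-separator in `G` : `u, v ∉ S` and every walk from `u` to `v` in `G`
meets `S` (i.e. `u` and `v` lie in different components of `G - S`). -/
def SimpleGraph.IsSeparator (G : SimpleGraph V) (u v : V) (S : Set V) : Prop :=
  u ∉ S ∧ v ∉ S ∧ ∀ p : G.Walk u v, ∃ x ∈ p.support, x ∈ S

/-- A minimal separator of `G`: an inclusion-minimal `u,v`-separator for some
non-adjacent pair of distinct vertices `u, v`. -/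
def SimpleGraph.IsMinimalSeparator (G : SimpleGraph V) (S : Set V) : Prop :=
  ∃ u v : V, u ≠ v ∧ ¬ G.Adj u v ∧ G.IsSeparator u v S ∧
    ∀ S' ⊂ S, ¬ G.IsSeparator u v S'

/-- The independence number of the subgraph of `G` induced by the set `A`:
the largest size of a finite set of pairwise non-adjacent vertices inside `A`. -/
noncomputable def SimpleGraph.indepNumOn (G : SimpleGraph V) (A : Set V) : ℕ :=
  sSup {n | ∃ s : Finset V, ↑s ⊆ A ∧ (∀ u ∈ s, ∀ v ∈ s, u ≠ v → ¬ G.Adj u v) ∧ s.card = n}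

/-- A tree decomposition of a graph `G`. -/
structure SimpleGraph.TreeDecomp (G : SimpleGraph V) where
  ι : Type
  tree : SimpleGraph ι
  isTree : tree.IsTree
  bag : ι → Set V
  bags_cover_vertices : ∀ v : V, ∃ t, v ∈ bag t
  bags_cover_edges : ∀ ⦃u v : V⦄, G.Adj u v → ∃ t, u ∈ bag t ∧ v ∈ bag t
  bags_connected : ∀ v : V, (tree.induce {t | v ∈ bag t}).Connected

/-- The independence number of a tree decomposition: the maximum, over all bags,
of the independence number of the subgraph induced by the bag. -/
noncomputable def SimpleGraph.TreeDecomp.indepNum {G : SimpleGraph V} (D : G.TreeDecomp) : ℕ∞ :=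
  ⨆ t : D.ι, (G.indepNumOn (D.bag t) : ℕ∞)

/-- The tree-independence number of `G`: the minimum independence number of
a tree decomposition of `G`. -/
noncomputable def SimpleGraph.treeIndepNum (G : SimpleGraph V) : ℕ∞ :=
  ⨅ D : G.TreeDecomp, D.indepNum

/-- The width of a tree decomposition: the maximum of `|X_t| - 1` over all bags. -/
noncomputable def SimpleGraph.TreeDecomp.width {G : SimpleGraph V} (D : G.TreeDecomp) : ℕ∞ :=
  ⨆ t : D.ι, (((D.bag t).ncard - 1 : ℕ) : ℕ∞)

/-- The treewidth of `G`. -/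
noncomputable def SimpleGraph.treewidth (G : SimpleGraph V) : ℕ∞ :=
  ⨅ D : G.TreeDecomp, D.width

/-- A graph is chordal if it has no induced cycle of length at least `4`. -/
def SimpleGraph.IsChordal (G : SimpleGraph V) : Prop :=
  ∀ n : ℕ, 4 ≤ n → ∀ A : Set V, ¬ Nonempty (cycleGraph n ≃g G.induce A)

/-- `H` is a minimal triangulation of `G`: a chordal supergraph of `G` on the same
vertex set such that no chordal graph lies strictly between `G` and `H`. -/
def SimpleGraph.IsMinimalTriangulation (G H : SimpleGraph V) : Prop :=
  G ≤ H ∧ H.IsChordal ∧ ∀ H' : SimpleGraph V, G ≤ H' → H'.IsChordal → ¬ H' < H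

/-- `X` is a potential maximal clique of `G`: a maximal clique in some
minimal triangulation of `G`. -/
def SimpleGraph.IsPotentialMaxClique (G : SimpleGraph V) (X : Set V) : Prop :=
  ∃ H : SimpleGraph V, G.IsMinimalTriangulation H ∧
    H.IsClique X ∧ ∀ Y : Set V, H.IsClique Y → X ⊆ Y → Y = X

/-- The pmc-independence number of `G`: the maximum independence number of a subgraph
of `G` induced by a potential maximal clique of `G`. -/
noncomputable def SimpleGraph.pmcIndepNum (G : SimpleGraph V) : ℕ :=
  sSup {n | ∃ X : Set V, G.IsPotentialMaxClique X ∧ n = G.indepNumOn X}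

/-- The maximum size of a minimal separator of `G` (`0` if `G` has no minimal separator). -/
noncomputable def SimpleGraph.maxMinimalSeparatorSize (G : SimpleGraph V) : ℕ :=
  sSup {n | ∃ S : Set V, G.IsMinimalSeparator S ∧ n = S.ncard}

/-- `G` is `k`-connected: `G` has at least `k+1` vertices and removing any set of fewer
than `k` vertices leaves a connected graph. -/
def SimpleGraph.IsKConnected (G : SimpleGraph V) [Fintype V] (k : ℕ) : Prop :=
  k + 1 ≤ Fintype.card V ∧
    ∀ X : Finset V, X.card < k → (G.induce ((↑X : Set V)ᶜ)).Connected

/-- The `n`-wheel `W_n`: the cycle `C_n` together with a universal vertex. -/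
def wheelGraph (n : ℕ) : SimpleGraph (Option (Fin n)) :=
  SimpleGraph.fromRel (fun a b =>
    a = none ∨ ∃ i j : Fin n, a = some i ∧ b = some j ∧ (cycleGraph n).Adj i j)

/-- `K₅⁻`: the complete graph on `5` vertices minus an edge. -/
def K5minus : SimpleGraph (Fin 5) := (completeGraph (Fin 5)).deleteEdges {s(0, 1)}

/-- The complete bipartite graph `K_{2,q}`. -/
abbrev K2q (q : ℕ) : SimpleGraph (Fin 2 ⊕ Fin q) := completeBipartiteGraph (Fin 2) (Fin q)

/-- The Hadwiger number of `G`: the largest `p` such that `K_p` is a minor of `G`. -/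
noncomputable def SimpleGraph.hadwigerNumber (G : SimpleGraph V) : ℕ :=
  sSup {p | G.HasMinor (completeGraph (Fin p))}

/-!
A chordal graph has no induced `C₄`-minor, let alone a `W₄`: given branch sets `A 0, …, A 3` of
an induced `C₄`-minor, a shortest closed walk passing through `A 0, A 1, A 2, A 3` in this order
has no chord and no repeated vertex, so it is a hole.

Conversely, let `C` be a hole of a `3`-connected graph `G` and `K` a component of `G - C`. By
`3`-connectivity `K` has at least three neighbours on `C`. If it has four, `K` is the hub of a
`W₄` whose rim consists of four arcs of `C`. If it has exactly three, `x`, `y`, `z`, then, `C`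
having length `≥ 4`, one of the three arcs between them, say the arc `P` from `x` to `y` avoiding
`z`, has an inner vertex. As `{x, y}` is not a separator, some component `L` of `G - C` has
neighbours in the interiors of both `P` and the opposite arc `Q`. Replacing `Q` by an induced
`x`–`y` path through `K` yields a new hole `C'`, and the component of `G - C'` containing `L` and
the interior of `Q` has four neighbours on `C'`: `x`, `y`, a vertex of `P`, and a vertex of `K`
(through `z`).
-/

open Set

def CycAdj (k i j : ℕ) : Prop :=
  j = i + 1 ∨ i = j + 1 ∨ (i = 0 ∧ j = k - 1) ∨ (j = 0 ∧ i = k - 1)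

theorem cycleGraph_adj_iff_cycAdj {k : ℕ} (hk : 2 ≤ k) (u v : Fin k) :
    (cycleGraph k).Adj u v ↔ CycAdj k u v := by
  have hmod : ∀ t, t < 2 * k → t % k = if t < k then t else t - k := fun t ht => by
    split
    · exact Nat.mod_eq_of_lt ‹_›
    · rw [Nat.mod_eq_sub_mod (show k ≤ t by omega), Nat.mod_eq_of_lt (by omega)]
  have hu := u.isLt
  have hv := v.isLt
  rw [cycleGraph_adj', Fin.sub_def, Fin.sub_def]
  simp only
  rw [hmod _ (by omega), hmod _ (by omega)]
  unfold CycAdj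
  split <;> split <;> omega

def rotIdx (k r i : ℕ) : ℕ := if i + r < k then i + r else i + r - k

theorem rotIdx_lt {k r i : ℕ} (hr : r < k) (hi : i < k) : rotIdx k r i < k := by
  unfold rotIdx; split <;> omega

theorem image_rotIdx {k r : ℕ} {f : ℕ → V} (hr : r < k) :
    (fun i => f (rotIdx k r i)) '' Iio k = f '' Iio k := by
  ext v
  constructor
  · rintro ⟨i, hi, rfl⟩
    exact ⟨_, rotIdx_lt hr hi, rfl⟩
  · rintro ⟨i, hi, rfl⟩
    rw [mem_Iio] at hi
    refine ⟨if r ≤ i then i - r else i + k - r, by rw [mem_Iio]; split <;> omega, ?_⟩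
    simp only [rotIdx]
    congr 1
    split_ifs <;> omega

/-- The closed sequence `p 0, …, p n, q (m - 1), …, q 1`: for `p 0 = q 0` and `p n = q m`, the
cycle formed by two paths between the same ends. -/
def glue (p q : ℕ → V) (n m s : ℕ) : V := if s ≤ n then p s else q (n + m - s)

theorem glue_cases {p q : ℕ → V} {n m s : ℕ} (h₀ : p 0 = q 0) (h₁ : p n = q m) (hs : s < n + m) :
    (0 < s ∧ s < n ∧ glue p q n m s = p s) ∨ ∃ j ≤ m, glue p q n m s = q j := by
  unfold glue
  split_ifs with hsn
  · rcases Nat.eq_zero_or_pos s with rfl | hs₀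
    · exact .inr ⟨0, Nat.zero_le _, h₀⟩
    rcases hsn.eq_or_lt with rfl | hsn
    · exact .inr ⟨m, le_rfl, h₁⟩
    · exact .inl ⟨hs₀, hsn, rfl⟩
  · exact .inr ⟨_, by omega, rfl⟩

def splice {α : Type} (c d : ℕ → α) (n s : ℕ) : α := if s ≤ n then c s else d (s - (n + 1))

theorem wheelGraph_adj_none_some {n : ℕ} (i : Fin n) : (wheelGraph n).Adj none (some i) := by
  simp [wheelGraph]

theorem wheelGraph_adj_some_some {n : ℕ} {i j : Fin n} :
    (wheelGraph n).Adj (some i) (some j) ↔ (cycleGraph n).Adj i j := by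
  simp only [wheelGraph, fromRel_adj, ne_eq, Option.some.injEq, reduceCtorEq, false_or,
    exists_and_left, exists_eq_left']
  constructor
  · rintro ⟨-, h | h⟩ <;> [exact h; exact h.symm]
  · exact fun h => ⟨h.ne, .inl h⟩

def wheelGraph.rimEmbedding (n : ℕ) : cycleGraph n ↪g wheelGraph n where
  toFun := some
  inj' := Option.some_injective _
  map_rel_iff' := wheelGraph_adj_some_some

namespace SimpleGraph

variable {G : SimpleGraph V} {S T : Set V} {a b c : V} {k : ℕ} {f : ℕ → V}

/-! ### Induced minor models -/

structure IsInducedMinorModel (G : SimpleGraph V) (H : SimpleGraph W) (X : W → Set V) :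
    Prop where
  connected : ∀ w, (G.induce (X w)).Connected
  pairwise_disjoint : Pairwise fun w₁ w₂ => Disjoint (X w₁) (X w₂)
  adj_iff : ∀ w₁ w₂, w₁ ≠ w₂ → (H.Adj w₁ w₂ ↔ ∃ v₁ ∈ X w₁, ∃ v₂ ∈ X w₂, G.Adj v₁ v₂)

theorem hasInducedMinor_iff {H : SimpleGraph W} :
    G.HasInducedMinor H ↔ ∃ X, G.IsInducedMinorModel H X :=
  ⟨fun ⟨X, h₁, h₂, h₃⟩ => ⟨X, h₁, h₂, h₃⟩, fun ⟨X, h₁, h₂, h₃⟩ => ⟨X, h₁, h₂, h₃⟩⟩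

theorem exists_adj_comm {A B : Set V} :
    (∃ v₁ ∈ A, ∃ v₂ ∈ B, G.Adj v₁ v₂) ↔ ∃ v₂ ∈ B, ∃ v₁ ∈ A, G.Adj v₂ v₁ :=
  ⟨fun ⟨v₁, h₁, v₂, h₂, h⟩ => ⟨v₂, h₂, v₁, h₁, h.symm⟩,
    fun ⟨v₂, h₂, v₁, h₁, h⟩ => ⟨v₁, h₁, v₂, h₂, h.symm⟩⟩

namespace IsInducedMinorModel

theorem comp {W' : Type} {H : SimpleGraph W} {H' : SimpleGraph W'} {X : W → Set V}
    (hX : G.IsInducedMinorModel H X) (e : H' ↪g H) : G.IsInducedMinorModel H' (X ∘ e) where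
  connected w := hX.connected (e w)
  pairwise_disjoint _ _ h := hX.pairwise_disjoint (e.injective.ne h)
  adj_iff _ _ h := e.map_adj_iff.symm.trans (hX.adj_iff _ _ (e.injective.ne h))

theorem wheel {n : ℕ} {X : Fin n → Set V} (hX : G.IsInducedMinorModel (cycleGraph n) X)
    {Y : Set V} (hY : (G.induce Y).Connected) (hYX : ∀ i, Disjoint Y (X i))
    (hadj : ∀ i, ∃ y ∈ Y, ∃ x ∈ X i, G.Adj y x) :
    G.IsInducedMinorModel (wheelGraph n) (fun w => w.elim Y X) where
  connected
    | none => hY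
    | some i => hX.connected i
  pairwise_disjoint
    | none, none, h => (h rfl).elim
    | none, some i, _ => hYX i
    | some i, none, _ => (hYX i).symm
    | some _, some _, h => hX.pairwise_disjoint fun hij => h (congrArg some hij)
  adj_iff
    | none, none, h => (h rfl).elim
    | none, some i, _ => iff_of_true (wheelGraph_adj_none_some i) (hadj i)
    | some i, none, _ => iff_of_true (wheelGraph_adj_none_some i).symm (exists_adj_comm.1 (hadj i))
    | some i, some j, h =>
      wheelGraph_adj_some_some.trans (hX.adj_iff i j fun hij => h (congrArg some hij))

end IsInducedMinorModel

/-! ### Reachability inside a vertex set -/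

def ReachableIn (G : SimpleGraph V) (S : Set V) (a b : V) : Prop :=
  ∃ (ha : a ∈ S) (hb : b ∈ S), (G.induce S).Reachable ⟨a, ha⟩ ⟨b, hb⟩

namespace ReachableIn

theorem left_mem (h : G.ReachableIn S a b) : a ∈ S := h.1

theorem right_mem (h : G.ReachableIn S a b) : b ∈ S := h.2.1

theorem refl (ha : a ∈ S) : G.ReachableIn S a a := ⟨ha, ha, .rfl⟩

theorem symm (h : G.ReachableIn S a b) : G.ReachableIn S b a :=
  let ⟨ha, hb, h⟩ := h; ⟨hb, ha, h.symm⟩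

theorem trans (h₁ : G.ReachableIn S a b) (h₂ : G.ReachableIn S b c) : G.ReachableIn S a c :=
  ⟨h₁.1, h₂.2.1, h₁.2.2.trans h₂.2.2⟩

theorem of_adj (hab : G.Adj a b) (ha : a ∈ S) (hb : b ∈ S) : G.ReachableIn S a b :=
  ⟨ha, hb, Adj.reachable (by simpa using hab)⟩

theorem mono (h : G.ReachableIn S a b) (hST : S ⊆ T) : G.ReachableIn T a b :=
  ⟨hST h.1, hST h.2.1, h.2.2.map (G.induceHomOfLE hST).toHom⟩

theorem of_chain {n : ℕ} {p : ℕ → V} (hS : ∀ i ≤ n, p i ∈ S)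
    (hp : ∀ i < n, G.Adj (p i) (p (i + 1))) : G.ReachableIn S (p 0) (p n) := by
  induction n with
  | zero => exact refl (hS 0 le_rfl)
  | succ n ih =>
    exact (ih (fun i hi => hS i (by omega)) fun i hi => hp i (by omega)).trans
      (of_adj (hp n (by omega)) (hS n (by omega)) (hS _ le_rfl))

theorem exists_chain (h : G.ReachableIn S a b) :
    ∃ n, ∃ p : ℕ → V, p 0 = a ∧ p n = b ∧ (∀ i ≤ n, p i ∈ S) ∧
      ∀ i < n, G.Adj (p i) (p (i + 1)) := by
  obtain ⟨ha, hb, ⟨w⟩⟩ := h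
  exact ⟨w.length, fun i => (w.getVert i).1, by simp, by simp, fun i _ => (w.getVert i).2,
    fun i hi => by simpa using w.adj_getVert_succ hi⟩

theorem mem_of_forall_adj {U : Set V} (h : G.ReachableIn S a b) (ha : a ∈ U)
    (hU : ∀ u y, u ∈ U → G.Adj u y → y ∈ S → y ∈ U) : b ∈ U := by
  obtain ⟨_, _, ⟨w⟩⟩ := h
  suffices ∀ {x y : S}, (G.induce S).Walk x y → x.1 ∈ U → y.1 ∈ U from this w ha
  intro x y w
  induction w with
  | nil => exact id
  | cons hxy _ ih => exact fun hx => ih (hU _ _ hx hxy (Subtype.property _))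

theorem exists_boundary_adj (h : G.ReachableIn S a b) {Z : Set V} (ha : a ∉ Z) (hb : b ∈ Z) :
    ∃ u z, G.ReachableIn (S \ Z) a u ∧ z ∈ S ∩ Z ∧ G.Adj u z := by
  by_contra! hno
  have : b ∈ {u | G.ReachableIn (S \ Z) a u} := by
    refine h.mem_of_forall_adj (refl ⟨h.1, ha⟩) fun u y hu huy hy => ?_
    by_cases hyZ : y ∈ Z
    · exact (hno u y hu ⟨hy, hyZ⟩ huy).elim
    · exact hu.trans (of_adj huy hu.right_mem ⟨hy, hyZ⟩)
  exact this.right_mem.2 hb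

end ReachableIn

theorem connected_induce_iff_reachableIn :
    (G.induce S).Connected ↔ S.Nonempty ∧ ∀ a ∈ S, ∀ b ∈ S, G.ReachableIn S a b := by
  refine ⟨fun h => ⟨?_, fun a ha b hb => ⟨ha, hb, h.preconnected _ _⟩⟩, fun ⟨⟨x, hx⟩, h⟩ => ?_⟩
  · obtain ⟨⟨x, hx⟩⟩ := h.nonempty
    exact ⟨x, hx⟩
  · have : Nonempty S := ⟨⟨x, hx⟩⟩
    exact ⟨fun ⟨a, ha⟩ ⟨b, hb⟩ => (h a ha b hb).2.2⟩

def componentIn (G : SimpleGraph V) (S : Set V) (v : V) : Set V := {w | G.ReachableIn S v w}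

theorem componentIn_subset : G.componentIn S a ⊆ S := fun _ h => h.right_mem

theorem ReachableIn.reachableIn_componentIn (h : G.ReachableIn S a b) :
    G.ReachableIn (G.componentIn S a) a b := by
  obtain ⟨n, p, rfl, rfl, hS, hp⟩ := h.exists_chain
  exact .of_chain (fun i hi => .of_chain (fun j hj => hS j (by omega)) fun j hj => hp j (by omega))
    hp

theorem connected_induce_componentIn (ha : a ∈ S) : (G.induce (G.componentIn S a)).Connected :=
  connected_induce_iff_reachableIn.2 ⟨⟨a, .refl ha⟩, fun _ hb _ hc =>
    hb.reachableIn_componentIn.symm.trans hc.reachableIn_componentIn⟩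

theorem IsKConnected.reachableIn_compl [Fintype V] (hG : G.IsKConnected k) {X : Finset V}
    (hX : X.card < k) (ha : a ∉ X) (hb : b ∉ X) : G.ReachableIn (↑X)ᶜ a b :=
  ⟨ha, hb, (hG.2 X hX).preconnected _ _⟩

theorem exists_adj_componentIn {C K : Set V} {w x y : V} (hw : w ∉ C) (hwx : G.Adj w x)
    (hxy : G.ReachableIn K x y) (hy : y ∈ C) :
    ∃ z ∈ K ∩ C, ∃ u ∈ G.componentIn Cᶜ w, G.Adj z u := by
  have hr : G.ReachableIn (insert w K) w y :=
    (ReachableIn.of_adj hwx (mem_insert _ _) (mem_insert_of_mem _ hxy.left_mem)).trans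
      (hxy.mono (subset_insert _ _))
  obtain ⟨u, z, hu, ⟨hzK, hzC⟩, huz⟩ := hr.exists_boundary_adj hw hy
  exact ⟨z, ⟨hzK.resolve_left fun h => hw (h ▸ hzC), hzC⟩, u, hu.mono fun _ h => h.2, huz.symm⟩

/-! ### Holes -/

structure IsHole (G : SimpleGraph V) (k : ℕ) (f : ℕ → V) : Prop where
  four_le : 4 ≤ k
  injOn : ∀ i < k, ∀ j < k, f i = f j → i = j
  adj_iff : ∀ i < k, ∀ j < k, (G.Adj (f i) (f j) ↔ CycAdj k i j)

theorem exists_isHole_iff_not_isChordal : (∃ k f, G.IsHole k f) ↔ ¬ G.IsChordal := by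
  constructor
  · rintro ⟨k, f, hf⟩ hG
    refine hG k hf.four_le (f '' Iio k) ⟨?_⟩
    have hbij : (fun i : Fin k => (⟨f i, i, i.2, rfl⟩ : f '' Iio k)).Bijective :=
      ⟨fun i j hij => Fin.ext (hf.injOn _ i.2 _ j.2 (congrArg Subtype.val hij)),
        fun ⟨_, i, hi, hfi⟩ => ⟨⟨i, hi⟩, Subtype.ext hfi⟩⟩
    refine ⟨Equiv.ofBijective _ hbij, fun {i j} => ?_⟩
    have := hf.four_le
    simp [hf.adj_iff _ i.2 _ j.2, cycleGraph_adj_iff_cycAdj (by omega : 2 ≤ k)]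
  · intro hG
    simp only [IsChordal, not_forall, not_not] at hG
    obtain ⟨k, hk, A, ⟨φ⟩⟩ := hG
    let g : ℕ → Fin k := fun i => ⟨i % k, Nat.mod_lt _ (by omega)⟩
    have hg : ∀ i < k, (g i : ℕ) = i := fun i hi => Nat.mod_eq_of_lt hi
    refine ⟨k, fun i => φ (g i), hk, fun i hi j hj hij => ?_, fun i hi j hj => ?_⟩
    · simpa [hg i hi, hg j hj] using congrArg Fin.val (φ.injective (Subtype.ext hij))
    · have := cycleGraph_adj_iff_cycAdj (by omega) (g i) (g j)
      rw [hg i hi, hg j hj, ← φ.map_adj_iff] at this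
      simpa using this

namespace IsHole

theorem ne (hf : G.IsHole k f) {i j : ℕ} (hi : i < k) (hj : j < k) (hij : i ≠ j) : f i ≠ f j :=
  fun h => hij (hf.injOn i hi j hj h)

theorem adj_succ (hf : G.IsHole k f) {i : ℕ} (hi : i + 1 < k) : G.Adj (f i) (f (i + 1)) :=
  (hf.adj_iff i (by omega) (i + 1) hi).2 (.inl rfl)

theorem adj_last (hf : G.IsHole k f) : G.Adj (f (k - 1)) (f 0) :=
  (hf.adj_iff _ (by have := hf.four_le; omega) 0 (by have := hf.four_le; omega)).2
    (.inr (.inr (.inr ⟨rfl, rfl⟩)))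

theorem rotate (hf : G.IsHole k f) {r : ℕ} (hr : r < k) :
    G.IsHole k (fun i => f (rotIdx k r i)) where
  four_le := hf.four_le
  injOn i hi j hj h := by
    have := hf.injOn _ (rotIdx_lt hr hi) _ (rotIdx_lt hr hj) h
    unfold rotIdx at this; split at this <;> split at this <;> omega
  adj_iff i hi j hj := by
    rw [hf.adj_iff _ (rotIdx_lt hr hi) _ (rotIdx_lt hr hj)]
    have := hf.four_le
    unfold CycAdj rotIdx; split <;> split <;> omega

theorem reachableIn (hf : G.IsHole k f) {lo hi i j : ℕ} (hhi : hi ≤ k)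
    (hT : ∀ s, lo ≤ s → s < hi → f s ∈ T) (hi₁ : lo ≤ i) (hi₂ : i < hi) (hj₁ : lo ≤ j)
    (hj₂ : j < hi) : G.ReachableIn T (f i) (f j) := by
  wlog hij : i ≤ j generalizing i j
  · exact (this hj₁ hj₂ hi₁ hi₂ (by omega)).symm
  have := ReachableIn.of_chain (G := G) (n := j - i) (p := fun s => f (i + s))
    (fun s hs => hT _ (by omega) (by omega))
    (fun s hs => hf.adj_succ (by omega))
  simpa [Nat.add_sub_cancel' hij] using this

theorem reachableIn_compl_pair [Fintype V] (hf : G.IsHole k f) (hG : G.IsKConnected 3)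
    {i j a b : ℕ} (hi : i < k) (hj : j < k) (ha : a < k) (hb : b < k) (hai : a ≠ i)
    (haj : a ≠ j) (hbi : b ≠ i) (hbj : b ≠ j) : G.ReachableIn {f i, f j}ᶜ (f a) (f b) := by
  classical
  simpa using hG.reachableIn_compl (X := {f i, f j}) (Finset.card_le_two.trans_lt (by norm_num))
    (by simp [hf.ne ha hi hai, hf.ne ha hj haj]) (by simp [hf.ne hb hi hbi, hf.ne hb hj hbj])

theorem connected_induce_image_Ico (hf : G.IsHole k f) {lo hi : ℕ} (hlo : lo < hi)
    (hhi : hi ≤ k) : (G.induce (f '' Ico lo hi)).Connected :=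
  connected_induce_iff_reachableIn.2 ⟨⟨f lo, lo, ⟨le_rfl, hlo⟩, rfl⟩, by
    rintro _ ⟨i, ⟨hi₁, hi₂⟩, rfl⟩ _ ⟨j, ⟨hj₁, hj₂⟩, rfl⟩
    exact hf.reachableIn hhi (fun s h₁ h₂ => ⟨s, ⟨h₁, h₂⟩, rfl⟩) hi₁ hi₂ hj₁ hj₂⟩

theorem disjoint_image_Ico (hf : G.IsHole k f) {lo₁ hi₁ lo₂ hi₂ : ℕ} (h : hi₁ ≤ lo₂)
    (hk : hi₂ ≤ k) : Disjoint (f '' Ico lo₁ hi₁) (f '' Ico lo₂ hi₂) := by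
  rw [Set.disjoint_left]
  rintro _ ⟨i, ⟨hi₁, hi₂⟩, rfl⟩ ⟨j, ⟨hj₁, hj₂⟩, hij⟩
  have := hf.injOn j (by omega) i (by omega) hij
  omega

theorem exists_adj_image_Ico (hf : G.IsHole k f) {lo mid hi : ℕ} (h₁ : lo < mid) (h₂ : mid < hi)
    (hk : hi ≤ k) : ∃ v₁ ∈ f '' Ico lo mid, ∃ v₂ ∈ f '' Ico mid hi, G.Adj v₁ v₂ :=
  ⟨f (mid - 1), ⟨_, ⟨by omega, by omega⟩, rfl⟩, f mid, ⟨_, ⟨le_rfl, h₂⟩, rfl⟩,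
    (hf.adj_iff _ (by omega) _ (by omega)).2 (by unfold CycAdj; omega)⟩

theorem exists_adj_image_Ico_wrap (hf : G.IsHole k f) {lo hi : ℕ} (h₁ : lo < k) (h₂ : 0 < hi) :
    ∃ v₁ ∈ f '' Ico lo k, ∃ v₂ ∈ f '' Ico 0 hi, G.Adj v₁ v₂ :=
  ⟨f (k - 1), ⟨_, ⟨by omega, by omega⟩, rfl⟩, f 0, ⟨_, ⟨le_rfl, h₂⟩, rfl⟩, hf.adj_last⟩

theorem not_exists_adj_image_Ico (hf : G.IsHole k f) {lo₁ hi₁ lo₂ hi₂ : ℕ} (h : hi₁ < lo₂)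
    (hk : hi₂ ≤ k) (hwrap : 0 < lo₁ ∨ hi₂ < k) :
    ¬ ∃ v₁ ∈ f '' Ico lo₁ hi₁, ∃ v₂ ∈ f '' Ico lo₂ hi₂, G.Adj v₁ v₂ := by
  rintro ⟨_, ⟨i, ⟨hi₁, hi₂⟩, rfl⟩, _, ⟨j, ⟨hj₁, hj₂⟩, rfl⟩, hij⟩
  have := (hf.adj_iff i (by omega) j (by omega)).1 hij
  unfold CycAdj at this
  omega

theorem isInducedMinorModel_cycleGraph_four (hf : G.IsHole k f) {o₁ o₂ o₃ : ℕ} (h₁ : 0 < o₁)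
    (h₂ : o₁ < o₂) (h₃ : o₂ < o₃) (h₄ : o₃ < k) :
    G.IsInducedMinorModel (cycleGraph 4)
      ![f '' Ico 0 o₁, f '' Ico o₁ o₂, f '' Ico o₂ o₃, f '' Ico o₃ k] where
  connected w := by
    fin_cases w <;> exact hf.connected_induce_image_Ico (by omega) (by omega)
  pairwise_disjoint w₁ w₂ h := by
    fin_cases w₁ <;> fin_cases w₂ <;>
      first
      | exact (h rfl).elim
      | exact hf.disjoint_image_Ico (by omega) (by omega)
      | exact (hf.disjoint_image_Ico (by omega) (by omega)).symm
  adj_iff w₁ w₂ h := by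
    fin_cases w₁ <;> fin_cases w₂ <;>
      first
      | exact (h rfl).elim
      | exact iff_of_true (by decide) (hf.exists_adj_image_Ico (by omega) (by omega) (by omega))
      | exact iff_of_true (by decide)
          (exists_adj_comm.1 (hf.exists_adj_image_Ico (by omega) (by omega) (by omega)))
      | exact iff_of_true (by decide) (hf.exists_adj_image_Ico_wrap (by omega) (by omega))
      | exact iff_of_true (by decide)
          (exists_adj_comm.1 (hf.exists_adj_image_Ico_wrap (by omega) (by omega)))
      | exact iff_of_false (by decide)
          (hf.not_exists_adj_image_Ico (by omega) (by omega) (by omega))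
      | exact iff_of_false (by decide)
          (exists_adj_comm.not.1 (hf.not_exists_adj_image_Ico (by omega) (by omega) (by omega)))

theorem hasInducedMinor_wheelGraph_four (hf : G.IsHole k f) {Y : Set V}
    (hY : (G.induce Y).Connected) (hYf : ∀ i < k, f i ∉ Y) {o₀ o₁ o₂ o₃ : ℕ} (h₁ : o₀ < o₁)
    (h₂ : o₁ < o₂) (h₃ : o₂ < o₃) (h₄ : o₃ < k)
    (hatt : ∀ i, i = o₀ ∨ i = o₁ ∨ i = o₂ ∨ i = o₃ → ∃ y ∈ Y, G.Adj (f i) y) :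
    G.HasInducedMinor (wheelGraph 4) := by
  wlog h₀ : o₀ = 0 generalizing f o₀ o₁ o₂ o₃
  · exact this (hf.rotate (r := o₀) (by omega)) (fun i hi => hYf _ (rotIdx_lt (by omega) hi))
      (o₁ := o₁ - o₀) (o₂ := o₂ - o₀) (o₃ := o₃ - o₀) (by omega) (by omega) (by omega) (by omega)
      (fun i hi => hatt _ (by unfold rotIdx; split <;> omega)) rfl
  subst h₀
  have hYarc : ∀ {lo hi : ℕ}, hi ≤ k → Disjoint Y (f '' Ico lo hi) := fun hhi =>
    Set.disjoint_right.2 fun _ ⟨i, hi, hfi⟩ => hfi ▸ hYf i (by simp at hi; omega)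
  have hYadj : ∀ {lo hi : ℕ}, lo < hi → (∃ y ∈ Y, G.Adj (f lo) y) →
      ∃ y ∈ Y, ∃ x ∈ f '' Ico lo hi, G.Adj y x := fun hlo ⟨y, hy, h⟩ =>
    ⟨y, hy, f _, ⟨_, ⟨le_rfl, hlo⟩, rfl⟩, h.symm⟩
  refine hasInducedMinor_iff.2 ⟨_, (hf.isInducedMinorModel_cycleGraph_four h₁ h₂ h₃ h₄).wheel hY
    (fun i => ?_) (fun i => ?_)⟩
  · fin_cases i <;> exact hYarc (by omega)
  · fin_cases i <;> exact hYadj (by omega) (hatt _ (by simp))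

theorem hasInducedMinor_wheelGraph_four_of_componentIn (hf : G.IsHole k f) {w : V}
    (hw : w ∉ f '' Iio k) {o₀ o₁ o₂ o₃ : ℕ} (h₁ : o₀ < o₁) (h₂ : o₁ < o₂) (h₃ : o₂ < o₃)
    (h₄ : o₃ < k) (hatt : ∀ i, i = o₀ ∨ i = o₁ ∨ i = o₂ ∨ i = o₃ →
      ∃ y ∈ G.componentIn (f '' Iio k)ᶜ w, G.Adj (f i) y) :
    G.HasInducedMinor (wheelGraph 4) :=
  hf.hasInducedMinor_wheelGraph_four (connected_induce_componentIn (S := (f '' Iio k)ᶜ) hw)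
    (fun i hi hiY => componentIn_subset hiY ⟨i, hi, rfl⟩) h₁ h₂ h₃ h₄ hatt

end IsHole

/-! ### Induced paths -/

structure IsInducedPath (G : SimpleGraph V) (p : ℕ → V) (n : ℕ) : Prop where
  injOn : ∀ i ≤ n, ∀ j ≤ n, p i = p j → i = j
  adj_iff : ∀ i ≤ n, ∀ j ≤ n, (G.Adj (p i) (p j) ↔ j = i + 1 ∨ i = j + 1)

theorem IsHole.isInducedPath (hf : G.IsHole k f) {n : ℕ} (hn : n + 2 ≤ k) :
    G.IsInducedPath f n where
  injOn i hi j hj := hf.injOn i (by omega) j (by omega)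
  adj_iff i hi j hj := by rw [hf.adj_iff i (by omega) j (by omega)]; unfold CycAdj; omega

theorem Walk.eq_add_one_of_adj_getVert {u v : V} {w : G.Walk u v} (hw : w.length = G.dist u v)
    {i j : ℕ} (hij : i < j) (hj : j ≤ w.length) (hadj : G.Adj (w.getVert i) (w.getVert j)) :
    j = i + 1 := by
  have := dist_le ((w.take i).append (.cons hadj (w.drop j)))
  simp only [Walk.length_append, Walk.take_length, Walk.length_cons, Walk.drop_length] at this
  omega

theorem ReachableIn.exists_isInducedPath {K : Set V}
    (h : G.ReachableIn (insert a (insert b K)) a b) :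
    ∃ n p, G.IsInducedPath p n ∧ p 0 = a ∧ p n = b ∧ ∀ i, 0 < i → i < n → p i ∈ K := by
  obtain ⟨ha, hb, hr⟩ := h
  obtain ⟨w, hw⟩ := hr.exists_walk_length_eq_dist
  have hinj : ∀ i ≤ w.length, ∀ j ≤ w.length, (w.getVert i).1 = (w.getVert j).1 → i = j :=
    fun i hi j hj hij => (w.isPath_of_length_eq_dist hw).getVert_injOn hi hj (Subtype.ext hij)
  refine ⟨w.length, fun i => (w.getVert i).1, ⟨hinj, fun i hi j hj => ⟨fun hadj => ?_, ?_⟩⟩,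
    by simp, by simp, fun i hi₀ hin => ?_⟩
  · rcases Nat.lt_trichotomy i j with hlt | rfl | hlt
    · exact .inl (Walk.eq_add_one_of_adj_getVert hw hlt hj (by simpa using hadj))
    · exact (G.irrefl hadj).elim
    · exact .inr (Walk.eq_add_one_of_adj_getVert hw hlt hi (by simpa using hadj.symm))
  · rintro (rfl | rfl)
    · simpa using w.adj_getVert_succ (by omega)
    · simpa using (w.adj_getVert_succ (by omega)).symm
  · have hT := (w.getVert i).2
    have h₀ : (w.getVert i).1 ≠ a := fun h =>
      absurd (hinj i (by omega) 0 (by omega) (by simpa using h)) (by omega)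
    have h₁ : (w.getVert i).1 ≠ b := fun h =>
      absurd (hinj i (by omega) w.length le_rfl (by simpa using h)) (by omega)
    simp only [mem_insert_iff] at hT
    tauto

theorem exists_isInducedPath_of_adj {K : Set V} {x y : V} (hab : a ≠ b) (hnadj : ¬ G.Adj a b)
    (hax : G.Adj a x) (hyb : G.Adj y b) (hxy : G.ReachableIn K x y) :
    ∃ n p, G.IsInducedPath p n ∧ 2 ≤ n ∧ p 0 = a ∧ p n = b ∧ ∀ i, 0 < i → i < n → p i ∈ K := by
  have hr : G.ReachableIn (insert a (insert b K)) a b :=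
    ((ReachableIn.of_adj hax (by simp) (by simp [hxy.left_mem])).trans
      (hxy.mono fun _ h => by simp [h])).trans
      (ReachableIn.of_adj hyb (by simp [hxy.right_mem]) (by simp))
  obtain ⟨n, p, hp, h₀, hn, hK⟩ := hr.exists_isInducedPath
  refine ⟨n, p, hp, ?_, h₀, hn, hK⟩
  by_contra! h
  interval_cases n
  · exact hab (h₀.symm.trans hn)
  · exact hnadj (h₀ ▸ hn ▸ (hp.adj_iff 0 (by omega) 1 le_rfl).2 (.inl rfl))

theorem IsInducedPath.isHole_glue {p q : ℕ → V} {n m : ℕ} (hp : G.IsInducedPath p n)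
    (hq : G.IsInducedPath q m) (hn : 2 ≤ n) (hm : 2 ≤ m) (h₀ : p 0 = q 0) (h₁ : p n = q m)
    (hne : ∀ i, 0 < i → i < n → ∀ j, 0 < j → j < m → p i ≠ q j)
    (hnadj : ∀ i, 0 < i → i < n → ∀ j, 0 < j → j < m → ¬ G.Adj (p i) (q j)) :
    G.IsHole (n + m) (glue p q n m) := by
  have hpq : ∀ i ≤ n, ∀ j, 0 < j → j < m →
      p i ≠ q j ∧ (G.Adj (p i) (q j) ↔ (i = 0 ∧ j = 1) ∨ (i = n ∧ j + 1 = m)) := by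
    intro i hi j hj₀ hjm
    rcases Nat.eq_zero_or_pos i with rfl | hi₀
    · rw [h₀, hq.adj_iff 0 (by omega) j (by omega)]
      exact ⟨fun h => absurd (hq.injOn 0 (by omega) j (by omega) h) (by omega), by omega⟩
    rcases hi.eq_or_lt with rfl | hin
    · rw [h₁, hq.adj_iff m le_rfl j (by omega)]
      exact ⟨fun h => absurd (hq.injOn m le_rfl j (by omega) h) (by omega), by omega⟩
    · exact ⟨hne i hi₀ hin j hj₀ hjm, iff_of_false (hnadj i hi₀ hin j hj₀ hjm) (by omega)⟩
  refine ⟨by omega, fun i hi j hj hij => ?_, fun i hi j hj => ?_⟩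
  · by_cases hin : i ≤ n <;> by_cases hjn : j ≤ n <;>
      simp only [glue, hin, hjn, if_true, if_false] at hij
    · exact hp.injOn i hin j hjn hij
    · exact ((hpq i hin _ (by omega) (by omega)).1 hij).elim
    · exact ((hpq j hjn _ (by omega) (by omega)).1 hij.symm).elim
    · have := hq.injOn _ (by omega) _ (by omega) hij
      omega
  · by_cases hin : i ≤ n <;> by_cases hjn : j ≤ n <;>
      simp only [glue, hin, hjn, if_true, if_false]
    · rw [hp.adj_iff i hin j hjn]; unfold CycAdj; omega
    · rw [(hpq i hin _ (by omega) (by omega)).2]; unfold CycAdj; omega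
    · rw [G.adj_comm, (hpq j hjn _ (by omega) (by omega)).2]; unfold CycAdj; omega
    · rw [hq.adj_iff _ (by omega) _ (by omega)]; unfold CycAdj; omega

/-! ### `3`-connected graphs that are not chordal -/

namespace IsHole

theorem exists_notMem_image [Fintype V] (hf : G.IsHole k f) (hG : G.IsKConnected 3) :
    ∃ v, v ∉ f '' Iio k := by
  have hk := hf.four_le
  by_contra! hall
  have hr := hf.reachableIn_compl_pair hG (i := 0) (j := 2) (a := 1) (b := 3)
    (by omega) (by omega) (by omega) (by omega) (by omega) (by omega) (by omega) (by omega)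
  -- the only neighbours of `f 1` are `f 0` and `f 2`
  have : f 3 ∈ ({f 1} : Set V) := by
    refine hr.mem_of_forall_adj rfl fun u y hu huy hy => ?_
    obtain ⟨j, hj, rfl⟩ := hall y
    rw [mem_singleton_iff.1 hu, hf.adj_iff 1 (by omega) j hj] at huy
    have : j ≠ 0 ∧ j ≠ 2 := by
      constructor <;> rintro rfl <;> simp at hy
    unfold CycAdj at huy
    omega
  exact hf.ne (i := 3) (j := 1) (by omega) (by omega) (by omega) this

theorem three_le_card_attach [Fintype V] (hf : G.IsHole k f) (hG : G.IsKConnected 3) {v : V}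
    (hv : v ∉ f '' Iio k) {att : Finset ℕ}
    (hatt : ∀ i, i ∈ att ↔ i < k ∧ ∃ x ∈ G.componentIn (f '' Iio k)ᶜ v, G.Adj (f i) x) :
    3 ≤ att.card := by
  classical
  by_contra! hcard
  obtain ⟨i₀, hi₀, hi₀att⟩ := Finset.exists_mem_notMem_of_card_lt_card
    (s := att) (t := Finset.range k) (by simpa using hcard.trans_le (by linarith [hf.four_le]))
  rw [Finset.mem_range] at hi₀
  -- the attachment vertices would separate `v` from `f i₀`
  have hr := hG.reachableIn_compl (X := att.image f) (a := v) (b := f i₀)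
    (Finset.card_image_le.trans_lt hcard)
    (fun h => by
      obtain ⟨i, hi, rfl⟩ := Finset.mem_image.1 h
      exact hv ⟨i, ((hatt i).1 hi).1, rfl⟩)
    (fun h => by
      obtain ⟨i, hi, hii₀⟩ := Finset.mem_image.1 h
      exact hi₀att (hf.injOn i ((hatt i).1 hi).1 i₀ hi₀ hii₀ ▸ hi))
  obtain ⟨u, z, hu, ⟨hzX, j, hj, rfl⟩, huz⟩ :=
    hr.exists_boundary_adj (Z := f '' Iio k) hv ⟨i₀, hi₀, rfl⟩
  exact hzX (Finset.mem_image_of_mem f ((hatt j).2 ⟨hj, u, hu.mono fun x hx => hx.2, huz.symm⟩))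

theorem exists_crossing [Fintype V] (hf : G.IsHole k f) (hG : G.IsKConnected 3) {β : ℕ}
    (hβ : 2 ≤ β) (hβk : β + 2 ≤ k) :
    ∃ a b, G.ReachableIn (f '' Iio k)ᶜ a b ∧ (∃ ρ, 0 < ρ ∧ ρ < β ∧ G.Adj a (f ρ)) ∧
      ∃ q, β < q ∧ q < k ∧ G.Adj b (f q) := by
  have hr := hf.reachableIn_compl_pair hG (i := 0) (j := β) (a := 1) (b := β + 1)
    (by omega) (by omega) (by omega) (by omega) (by omega) (by omega) (by omega) (by omega)
  have hfar : ∀ t, f t ∈ f '' Ioo β k → t < k → β < t := fun t ⟨s, hs, hst⟩ ht => by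
    rw [mem_Ioo] at hs
    have := hf.injOn s (by omega) t ht hst
    omega
  -- a path from `f 1` to `f (β + 1)` avoiding `f 0` and `f β` must cross from the near side to
  -- the far side of the hole through its complement
  obtain ⟨b, _, hb, ⟨-, q, hq, rfl⟩, hbq⟩ :=
    hr.exists_boundary_adj (Z := f '' Ioo β k) (fun h => by have := hfar 1 h; omega)
      ⟨β + 1, by rw [mem_Ioo]; omega, rfl⟩
  rw [mem_Ioo] at hq
  have hbC : b ∉ f '' Iio k := by
    rintro ⟨t, ht, rfl⟩
    rw [mem_Iio] at ht
    have ht₀ : t ≠ 0 := by rintro rfl; exact hb.right_mem.1 (by simp)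
    have htβ : t ≠ β := by rintro rfl; exact hb.right_mem.1 (by simp)
    have htβ' : ¬ β < t := fun h => hb.right_mem.2 ⟨t, ⟨h, ht⟩, rfl⟩
    have := (hf.adj_iff t ht q hq.2).1 hbq
    unfold CycAdj at this
    omega
  obtain ⟨a, _, ha, ⟨⟨hρX, hρF⟩, ρ, hρ, rfl⟩, haρ⟩ :=
    hb.symm.exists_boundary_adj (Z := f '' Iio k) hbC ⟨1, by rw [mem_Iio]; omega, rfl⟩
  rw [mem_Iio] at hρ
  have hρ₀ : ρ ≠ 0 := by rintro rfl; exact hρX (by simp)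
  have hρβ : ρ ≠ β := by rintro rfl; exact hρX (by simp)
  have hρβ' : ¬ β < ρ := fun h => hρF ⟨ρ, ⟨h, hρ⟩, rfl⟩
  exact ⟨a, b, (ha.mono fun x hx => hx.2).symm, ⟨ρ, by omega, by omega, haρ⟩, q, hq.1, hq.2, hbq⟩

theorem exists_reroute (hf : G.IsHole k f) {K : Set V} (hKC : ∀ x ∈ K, x ∉ f '' Iio k) {β : ℕ}
    (hβ : 2 ≤ β) (hβk : β + 2 ≤ k) (hnear : ∀ t, 0 < t → t < β → ∀ x ∈ K, ¬ G.Adj (f t) x)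
    {x₀ x₁ : V} (h₀ : G.Adj (f 0) x₀) (h₁ : G.Adj (f β) x₁) (hK : G.ReachableIn K x₀ x₁) :
    ∃ n, ∃ p : ℕ → V, 2 ≤ n ∧ p 0 = f 0 ∧ p n = f β ∧ (∀ i, 0 < i → i < n → p i ∈ K) ∧
      G.IsHole (n + β) (glue p f n β) := by
  obtain ⟨n, p, hp, hn, hp₀, hpn, hpK⟩ := exists_isInducedPath_of_adj
    (hf.ne (by omega) (by omega) (by omega))
    (fun h => by have := (hf.adj_iff 0 (by omega) β (by omega)).1 h; unfold CycAdj at this; omega)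
    h₀ h₁.symm hK
  exact ⟨n, p, hn, hp₀, hpn, hpK, hp.isHole_glue (hf.isInducedPath (by omega)) hn hβ hp₀ hpn
    (fun i hi₀ hin j _ hj h => hKC _ (hpK i hi₀ hin) ⟨j, by rw [mem_Iio]; omega, h.symm⟩)
    (fun i hi₀ hin j hj₀ hj h => hnear j hj₀ hj _ (hpK i hi₀ hin) h.symm)⟩

/-- Rerouting the hole from `f 0` to `f β` through the component `K` of `v` leaves `a`, `b`,
`f γ` and the arc `f (β + 1), …, f (k - 1)` in one component `M` of the complement of the new
hole, and `M` attaches at `f 0`, at `f β`, at `f ρ` and, through `f γ`, inside `K`. -/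
theorem hasInducedMinor_wheelGraph_four_of_crossing (hf : G.IsHole k f) {v : V} {β γ : ℕ}
    (hβ : 2 ≤ β) (hβγ : β < γ) (hγk : γ < k)
    (hatt : ∀ i < k, (∃ x ∈ G.componentIn (f '' Iio k)ᶜ v, G.Adj (f i) x) ↔ i = 0 ∨ i = β ∨ i = γ)
    {a b : V} (hab : G.ReachableIn (f '' Iio k)ᶜ a b) {ρ q : ℕ} (hρ : 0 < ρ) (hρβ : ρ < β)
    (hβq : β < q) (hqk : q < k) (ha : G.Adj a (f ρ)) (hb : G.Adj b (f q)) :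
    G.HasInducedMinor (wheelGraph 4) := by
  set C := f '' Iio k
  set K := G.componentIn Cᶜ v
  have hfC : ∀ {i}, i < k → f i ∈ C := fun hi => ⟨_, hi, rfl⟩
  have hKC : ∀ {x}, x ∈ K → x ∉ C := fun hx => componentIn_subset hx
  have haK : ∀ {x}, G.ReachableIn Cᶜ a x → x ∉ K := fun hx hxK => by
    have := (hatt ρ (by omega)).1 ⟨a, hxK.trans hx.symm, ha.symm⟩
    omega
  obtain ⟨x₀, hx₀, h₀⟩ := (hatt 0 (by omega)).2 (.inl rfl)
  obtain ⟨x₁, hx₁, h₁⟩ := (hatt β (by omega)).2 (.inr (.inl rfl))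
  obtain ⟨n, p, hn, hp₀, hpn, hpK, hg⟩ := hf.exists_reroute (fun _ => hKC) hβ (by omega)
    (fun t ht₀ htβ x hx h => by have := (hatt t (by omega)).1 ⟨x, hx, h⟩; omega) h₀ h₁
    (hx₀.reachableIn_componentIn.symm.trans hx₁.reachableIn_componentIn)
  set C' := glue p f n β '' Iio (n + β)
  set M := G.componentIn C'ᶜ (f γ)
  have hC' : ∀ {x}, x ∈ C' → x ∈ K ∨ ∃ t ≤ β, x = f t := by
    rintro _ ⟨s, hs, rfl⟩
    rcases glue_cases hp₀ hpn hs with ⟨hs₀, hsn, h⟩ | ⟨t, ht, h⟩ <;> rw [h]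
    exacts [.inl (hpK s hs₀ hsn), .inr ⟨t, ht, rfl⟩]
  have hnotMem : ∀ {x}, x ∉ K → x ∉ C → x ∉ C' := fun hxK hxC hx =>
    (hC' hx).elim hxK fun ⟨t, _, h⟩ => hxC (h ▸ hfC (by omega))
  have hfM : ∀ {t}, β < t → t < k → f t ∈ M := fun hβt htk =>
    hf.reachableIn (lo := β + 1) le_rfl
      (fun r hβr hrk hr => (hC' hr).elim (fun h => hKC h (hfC hrk))
        fun ⟨t, ht, h⟩ => hf.ne hrk (by omega) (by omega) h)
      (by omega) hγk (by omega) htk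
  have hbM : b ∈ M :=
    (hfM hβq hqk).trans (.of_adj hb.symm (hfM hβq hqk).right_mem
      (hnotMem (haK hab) hab.right_mem))
  have haM : a ∈ M := hbM.trans (hab.reachableIn_componentIn.mono fun x hx =>
    hnotMem (haK hx) hx.right_mem).symm
  obtain ⟨x₂, hx₂, h₂⟩ := (hatt γ hγk).2 (.inr (.inr rfl))
  obtain ⟨_, ⟨hzK, s, hs, rfl⟩, u, huM, hsu⟩ := exists_adj_componentIn (hfM hβγ hγk).left_mem h₂
    (hx₂.reachableIn_componentIn.symm.trans (hpK 1 (by omega) (by omega)).reachableIn_componentIn)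
    (show p 1 ∈ C' from ⟨1, by rw [mem_Iio]; omega, by simp [glue]; omega⟩)
  obtain ⟨hs₀, hsn, -⟩ := (glue_cases hp₀ hpn hs).resolve_right fun ⟨t, ht, h⟩ =>
    hKC hzK (h ▸ hfC (by omega))
  refine hg.hasInducedMinor_wheelGraph_four_of_componentIn (hfM hβγ hγk).left_mem
    (o₀ := 0) (o₁ := s) (o₂ := n) (o₃ := n + β - ρ) hs₀ hsn (by omega) (by omega) ?_
  rintro i (rfl | rfl | rfl | rfl)
  · rw [glue, if_pos (Nat.zero_le _), hp₀]
    exact ⟨_, hfM (t := k - 1) (by omega) (by omega), hf.adj_last.symm⟩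
  · exact ⟨u, huM, hsu⟩
  · rw [glue, if_pos le_rfl, hpn]
    exact ⟨_, hfM (t := β + 1) (by omega) (by omega), hf.adj_succ (by omega)⟩
  · rw [glue, if_neg (by omega), show n + β - (n + β - ρ) = ρ by omega]
    exact ⟨a, haM, ha.symm⟩

theorem hasInducedMinor_wheelGraph_four_or_eq_one [Fintype V] (hf : G.IsHole k f)
    (hG : G.IsKConnected 3) {v : V} {β γ : ℕ} (hβ : 0 < β) (hβγ : β < γ) (hγk : γ < k)
    (hatt : ∀ i < k, (∃ x ∈ G.componentIn (f '' Iio k)ᶜ v, G.Adj (f i) x) ↔ i = 0 ∨ i = β ∨ i = γ) :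
    G.HasInducedMinor (wheelGraph 4) ∨ β = 1 := by
  rcases Nat.lt_or_ge β 2 with hβ₁ | hβ₂
  · exact .inr (by omega)
  obtain ⟨a, b, hab, ⟨ρ, hρ, hρβ, ha⟩, q, hβq, hqk, hb⟩ := hf.exists_crossing hG hβ₂ (by omega)
  exact .inl (hf.hasInducedMinor_wheelGraph_four_of_crossing hβ₂ hβγ hγk hatt hab hρ hρβ hβq hqk
    ha hb)

end IsHole

theorem IsHole.hasInducedMinor_wheelGraph_four_of_three_attach [Fintype V] (hf : G.IsHole k f)
    (hG : G.IsKConnected 3) {v : V} {i₁ i₂ i₃ : ℕ} (h₁₂ : i₁ < i₂) (h₂₃ : i₂ < i₃) (h₃ : i₃ < k)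
    (hatt : ∀ i < k,
      (∃ x ∈ G.componentIn (f '' Iio k)ᶜ v, G.Adj (f i) x) ↔ i = i₁ ∨ i = i₂ ∨ i = i₃) :
    G.HasInducedMinor (wheelGraph 4) := by
  have key : ∀ r < k, ∀ β γ, 0 < β → β < γ → γ < k → (∀ t < k,
      (rotIdx k r t = i₁ ∨ rotIdx k r t = i₂ ∨ rotIdx k r t = i₃) ↔ t = 0 ∨ t = β ∨ t = γ) →
      G.HasInducedMinor (wheelGraph 4) ∨ β = 1 := by
    intro r hr β γ hβ hβγ hγk hrot
    refine (hf.rotate hr).hasInducedMinor_wheelGraph_four_or_eq_one hG (v := v) hβ hβγ hγk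
      fun t ht => ?_
    rw [image_rotIdx hr, ← hrot t ht, hatt _ (rotIdx_lt hr ht)]
  -- otherwise the three arcs between consecutive attachments would all be single edges
  have := hf.four_le
  rcases key i₁ (by omega) (i₂ - i₁) (i₃ - i₁) (by omega) (by omega) (by omega)
    (fun t ht => by unfold rotIdx; split <;> omega) with h | h
  · exact h
  rcases key i₂ (by omega) (i₃ - i₂) (k - i₂ + i₁) (by omega) (by omega) (by omega)
    (fun t ht => by unfold rotIdx; split <;> omega) with h | h'
  · exact h
  rcases key i₃ (by omega) (k - i₃ + i₁) (k - i₃ + i₂) (by omega) (by omega) (by omega)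
    (fun t ht => by unfold rotIdx; split <;> omega) with h | h''
  · exact h
  omega

theorem hasInducedMinor_wheelGraph_four_of_not_isChordal [Fintype V] (hG : G.IsKConnected 3)
    (hch : ¬ G.IsChordal) : G.HasInducedMinor (wheelGraph 4) := by
  classical
  obtain ⟨k, f, hf⟩ := exists_isHole_iff_not_isChordal.2 hch
  obtain ⟨v, hv⟩ := hf.exists_notMem_image hG
  set K := G.componentIn (f '' Iio k)ᶜ v
  set att := (Finset.range k).filter fun i => ∃ x ∈ K, G.Adj (f i) x
  have hatt : ∀ i, i ∈ att ↔ i < k ∧ ∃ x ∈ K, G.Adj (f i) x := by simp [att]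
  rcases (hf.three_le_card_attach hG hv hatt).eq_or_lt with h₃ | h₄
  · set e := att.orderEmbOfFin h₃.symm
    have he : ∀ i, i ∈ att ↔ i = e 0 ∨ i = e 1 ∨ i = e 2 := by
      intro i
      rw [← Finset.mem_coe, ← att.range_orderEmbOfFin h₃.symm, Set.mem_range, Fin.exists_fin_succ,
        Fin.exists_fin_succ, Fin.exists_fin_succ]
      simp [eq_comm, e]
    exact hf.hasInducedMinor_wheelGraph_four_of_three_attach hG (v := v)
      (e.strictMono (show (0 : Fin 3) < 1 by decide))
      (e.strictMono (show (1 : Fin 3) < 2 by decide))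
      ((hatt _).1 (att.orderEmbOfFin_mem h₃.symm 2)).1 fun i hi => by rw [← he, hatt]; simp [hi, K]
  · obtain ⟨s, hs, hcard⟩ := Finset.exists_subset_card_eq (show 4 ≤ att.card by omega)
    set e := s.orderEmbOfFin hcard
    have hmem : ∀ i, e i < k ∧ ∃ x ∈ K, G.Adj (f (e i)) x := fun i =>
      (hatt _).1 (hs (s.orderEmbOfFin_mem hcard i))
    exact hf.hasInducedMinor_wheelGraph_four_of_componentIn hv
      (e.strictMono (show (0 : Fin 4) < 1 by decide))
      (e.strictMono (show (1 : Fin 4) < 2 by decide))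
      (e.strictMono (show (2 : Fin 4) < 3 by decide)) (hmem 3).1
      (by rintro i (rfl | rfl | rfl | rfl) <;> exact (hmem _).2)

/-! ### Chordal graphs -/

structure IsLabelledChain (G : SimpleGraph V) (A : ℕ → Set V) (n : ℕ) (c : ℕ → V)
    (lab : ℕ → ℕ) : Prop where
  mem : ∀ s ≤ n, c s ∈ A (lab s)
  lab_succ : ∀ s < n, lab s ≤ lab (s + 1) ∧ lab (s + 1) ≤ lab s + 1
  adj : ∀ s < n, G.Adj (c s) (c (s + 1))

namespace IsLabelledChain

variable {A : ℕ → Set V} {n : ℕ} {c : ℕ → V} {lab : ℕ → ℕ}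

theorem lab_mono (h : G.IsLabelledChain A n c lab) {i j : ℕ} (hij : i ≤ j) (hj : j ≤ n) :
    lab i ≤ lab j := by
  induction j, hij using Nat.le_induction with
  | base => exact le_rfl
  | succ j _ ih => exact (ih (by omega)).trans (h.lab_succ j (by omega)).1

theorem lab_le (h : G.IsLabelledChain A n c lab) {s : ℕ} (hs : s ≤ n) : lab s ≤ lab 0 + s := by
  induction s with
  | zero => simp
  | succ s ih => linarith [ih (by omega), (h.lab_succ s (by omega)).2]

theorem of_le (h : G.IsLabelledChain A n c lab) {m : ℕ} (hm : m ≤ n) :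
    G.IsLabelledChain A m c lab where
  mem s hs := h.mem s (by omega)
  lab_succ s hs := h.lab_succ s (by omega)
  adj s hs := h.adj s (by omega)

theorem shift (h : G.IsLabelledChain A n c lab) {i : ℕ} (hi : i ≤ n) :
    G.IsLabelledChain A (n - i) (fun s => c (i + s)) (fun s => lab (i + s)) where
  mem s hs := h.mem _ (by omega)
  lab_succ s hs := h.lab_succ (i + s) (by omega)
  adj s hs := h.adj (i + s) (by omega)

theorem splice (h₁ : G.IsLabelledChain A n c lab) {n' : ℕ} {d : ℕ → V} {lab' : ℕ → ℕ}
    (h₂ : G.IsLabelledChain A n' d lab') (hadj : G.Adj (c n) (d 0))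
    (hlab : lab n ≤ lab' 0 ∧ lab' 0 ≤ lab n + 1) :
    G.IsLabelledChain A (n + 1 + n') (splice c d n) (splice lab lab' n) where
  mem s hs := by
    unfold _root_.splice
    split_ifs with h
    exacts [h₁.mem s h, h₂.mem _ (by omega)]
  lab_succ s hs := by
    unfold _root_.splice
    split_ifs with h h' h'
    · exact h₁.lab_succ s (by omega)
    · rw [show s = n by omega, show n + 1 - (n + 1) = 0 by omega]; exact hlab
    · omega
    · rw [show s + 1 - (n + 1) = s - (n + 1) + 1 by omega]; exact h₂.lab_succ _ (by omega)
  adj s hs := by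
    unfold _root_.splice
    split_ifs with h h' h'
    · exact h₁.adj s (by omega)
    · rw [show s = n by omega, show n + 1 - (n + 1) = 0 by omega]; exact hadj
    · omega
    · rw [show s + 1 - (n + 1) = s - (n + 1) + 1 by omega]; exact h₂.adj _ (by omega)

end IsLabelledChain

/-- A closed walk `c 0, …, c (m - 1)` visiting `A 0, A 1, A 2, A 3` in this order. -/
structure IsNecklace (G : SimpleGraph V) (A : ℕ → Set V) (m : ℕ) (c : ℕ → V) (lab : ℕ → ℕ) :
    Prop extends G.IsLabelledChain A (m - 1) c lab where
  lab_zero : lab 0 = 0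
  lab_last : lab (m - 1) = 3
  adj_last : G.Adj (c (m - 1)) (c 0)

namespace IsNecklace

variable {A : ℕ → Set V} {m : ℕ} {c : ℕ → V} {lab : ℕ → ℕ}

theorem four_le (h : G.IsNecklace A m c lab) : 4 ≤ m := by
  have := h.lab_le (s := m - 1) le_rfl
  rw [h.lab_zero, h.lab_last] at this
  omega

theorem shortcut (h : G.IsNecklace A m c lab) {i j : ℕ} (hij : i < j) (hjm : j < m)
    (hadj : G.Adj (c i) (c j)) (hlab : lab j ≤ lab i + 1) :
    G.IsNecklace A (i + 1 + (m - j)) (splice c (fun s => c (j + s)) i)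
      (splice lab (fun s => lab (j + s)) i) := by
  have hlast : i + 1 + (m - j) - 1 = i + 1 + (m - 1 - j) := by omega
  have hend : ∀ {α : Type} (d : ℕ → α),
      splice d (fun s => d (j + s)) i (i + 1 + (m - 1 - j)) = d (m - 1) := fun d => by
    unfold _root_.splice
    rw [if_neg (by omega)]
    exact congrArg d (by omega)
  refine ⟨?_, by simp [_root_.splice, h.lab_zero], ?_, ?_⟩
  · rw [hlast]
    exact (h.of_le (m := i) (by omega)).splice (h.shift (i := j) (by omega)) (by simpa using hadj)
      (by simpa using ⟨h.lab_mono hij.le (by omega), hlab⟩)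
  · rw [hlast, hend, h.lab_last]
  · rw [hlast, hend]
    simpa [_root_.splice] using h.adj_last

theorem segment (h : G.IsNecklace A m c lab) {i j : ℕ} (hij : i < j) (hjm : j < m)
    (hadj : G.Adj (c i) (c j)) (hi : lab i = 0) (hj : lab j = 3) :
    G.IsNecklace A (j - i + 1) (fun s => c (i + s)) (fun s => lab (i + s)) where
  toIsLabelledChain := by simpa using (h.of_le (m := j) (by omega)).shift hij.le
  lab_zero := by simpa using hi
  lab_last := by simpa [show i + (j - i) = j by omega] using hj
  adj_last := by simpa [show i + (j - i) = j by omega] using hadj.symm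

theorem adj_of_minimal (h : G.IsNecklace A m c lab)
    (hmin : ∀ m' < m, ∀ c' lab', ¬ G.IsNecklace A m' c' lab')
    (hfar : ∀ s ≤ 1, ∀ u ∈ A s, ∀ w ∈ A (s + 2), ¬ G.Adj u w) {i j : ℕ} (hij : i < j)
    (hjm : j < m) (hadj : G.Adj (c i) (c j)) : j = i + 1 ∨ (i = 0 ∧ j = m - 1) := by
  have hmono := h.lab_mono hij.le (by omega)
  have h₃ : lab j ≤ 3 := h.lab_last ▸ h.lab_mono (i := j) (j := m - 1) (by omega) le_rfl
  by_contra! hne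
  rcases Nat.lt_or_ge (lab j) (lab i + 2) with hlab | hlab
  · exact hmin _ (by omega) _ _ (h.shortcut hij hjm hadj (by omega))
  rcases (show lab j = lab i + 2 ∨ (lab i = 0 ∧ lab j = 3) by omega) with hlab | ⟨hi, hj⟩
  · exact hfar (lab i) (by omega) _ (h.mem i (by omega)) _ (hlab ▸ h.mem j (by omega)) hadj
  · exact hmin _ (by omega) _ _ (h.segment hij hjm hadj hi hj)

/-- A repeated vertex `c i = c j` would be adjacent to both neighbours of `c j`. -/
theorem ne_of_minimal (h : G.IsNecklace A m c lab)
    (hmin : ∀ m' < m, ∀ c' lab', ¬ G.IsNecklace A m' c' lab')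
    (hdisj : ∀ s ≤ 3, ∀ t ≤ 3, s ≠ t → Disjoint (A s) (A t))
    (hfar : ∀ s ≤ 1, ∀ u ∈ A s, ∀ w ∈ A (s + 2), ¬ G.Adj u w) {i j : ℕ} (hij : i < j)
    (hjm : j < m) : c i ≠ c j := by
  intro heq
  have hlab : ∀ s < m, lab s ≤ 3 := fun s hs =>
    h.lab_last ▸ h.lab_mono (i := s) (j := m - 1) (by omega) le_rfl
  have hi₀ := h.lab_zero
  have hlast := h.lab_last
  have hij' : lab i = lab j := by
    by_contra hne
    exact Set.disjoint_left.1 (hdisj _ (hlab i (by omega)) _ (hlab j hjm) hne)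
      (h.mem i (by omega)) (heq ▸ h.mem j (by omega))
  rcases Nat.lt_or_ge (j + 1) m with hj | hj
  · have hstep := h.lab_succ j (by omega)
    rcases h.adj_of_minimal hmin hfar (j := j + 1) (by omega) hj (heq ▸ h.adj j (by omega))
      with h' | ⟨rfl, h'⟩
    · omega
    · rw [h'] at hstep; omega
  · have hi : i ≠ 0 := by
      rintro rfl
      exact G.irrefl (heq ▸ (show j = m - 1 by omega) ▸ h.adj_last)
    have hstep := h.lab_succ 0 (by omega)
    rcases h.adj_of_minimal hmin hfar (i := 0) (j := i) (by omega) (by omega)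
      (heq ▸ (show j = m - 1 by omega) ▸ h.adj_last.symm) with rfl | ⟨-, h'⟩
    · rw [hij', show j = m - 1 by omega] at hstep
      omega
    · omega

theorem isHole_of_minimal (h : G.IsNecklace A m c lab)
    (hmin : ∀ m' < m, ∀ c' lab', ¬ G.IsNecklace A m' c' lab')
    (hdisj : ∀ s ≤ 3, ∀ t ≤ 3, s ≠ t → Disjoint (A s) (A t))
    (hfar : ∀ s ≤ 1, ∀ u ∈ A s, ∀ w ∈ A (s + 2), ¬ G.Adj u w) : G.IsHole m c := by
  have hm := h.four_le
  refine ⟨hm, fun i hi j hj hij => ?_, fun i hi j hj => ⟨fun hadj => ?_, ?_⟩⟩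
  · by_contra hne
    rcases Nat.lt_or_gt_of_ne hne with hlt | hlt
    exacts [h.ne_of_minimal hmin hdisj hfar hlt hj hij,
      h.ne_of_minimal hmin hdisj hfar hlt hi hij.symm]
  · rcases Nat.lt_trichotomy i j with hlt | rfl | hlt
    · have := h.adj_of_minimal hmin hfar hlt hj hadj; unfold CycAdj; omega
    · exact (G.irrefl hadj).elim
    · have := h.adj_of_minimal hmin hfar hlt hi hadj.symm; unfold CycAdj; omega
  · unfold CycAdj
    rintro (rfl | rfl | ⟨rfl, rfl⟩ | ⟨rfl, rfl⟩)
    · exact h.adj i (by omega)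
    · exact (h.adj j (by omega)).symm
    · exact h.adj_last.symm
    · exact h.adj_last

end IsNecklace

theorem IsInducedMinorModel.exists_isNecklace {X : Fin 4 → Set V}
    (hX : G.IsInducedMinorModel (cycleGraph 4) X) :
    ∃ m c lab, G.IsNecklace (fun t => X ⟨t % 4, by omega⟩) m c lab := by
  set A : ℕ → Set V := fun t => X ⟨t % 4, by omega⟩
  have hnext : ∀ t : ℕ, ∃ u ∈ A t, ∃ w ∈ A (t + 1), G.Adj u w := fun t =>
    (hX.adj_iff _ _ (by simp only [ne_eq, Fin.ext_iff]; omega)).1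
      ((cycleGraph_adj_iff_cycAdj (by norm_num) _ _).2 (by simp only [CycAdj]; omega))
  choose e he a ha hea using hnext
  have hchain : ∀ t : ℕ, ∀ u ∈ A t, ∀ w ∈ A t,
      ∃ n d, d 0 = u ∧ d n = w ∧ G.IsLabelledChain A n d (fun _ => t) := fun t u hu w hw => by
    obtain ⟨n, d, h₀, hn, hd, hadj⟩ :=
      ((connected_induce_iff_reachableIn.1 (hX.connected _)).2 u hu w hw).exists_chain
    exact ⟨n, d, h₀, hn, ⟨hd, fun _ _ => by omega, hadj⟩⟩
  -- `a t` enters `A (t + 1)`, so `a 3` enters `A 4 = A 0`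
  have key : ∀ t ≤ 3, ∃ n c lab, c 0 = a 3 ∧ c n = e t ∧ lab 0 = 0 ∧ lab n = t ∧
      G.IsLabelledChain A n c lab := by
    intro t ht
    induction t with
    | zero =>
      obtain ⟨n, d, h₀, hn, hd⟩ := hchain 0 (a 3) (ha 3) (e 0) (he 0)
      exact ⟨n, d, fun _ => 0, h₀, hn, rfl, rfl, hd⟩
    | succ t ih =>
      obtain ⟨n, c, lab, hc₀, hcn, hl₀, hln, hc⟩ := ih (by omega)
      obtain ⟨n', d, hd₀, hdn, hd⟩ := hchain (t + 1) (a t) (ha t) (e (t + 1)) (he (t + 1))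
      have hlast : ∀ {α : Type} (x y : ℕ → α), splice x y n (n + 1 + n') = y n' :=
        fun _ _ => by rw [splice, if_neg (by omega), Nat.add_sub_cancel_left]
      refine ⟨n + 1 + n', splice c d n, splice lab (fun _ => t + 1) n, by simp [splice, hc₀],
        by rw [hlast, hdn], by simp [splice, hl₀], by rw [hlast],
        hc.splice hd (by rw [hcn, hd₀]; exact hea t) (by rw [hln]; omega)⟩
  obtain ⟨n, c, lab, hc₀, hcn, hl₀, hln, hc⟩ := key 3 le_rfl
  exact ⟨n + 1, c, lab, by simpa using hc, hl₀, by simpa using hln, by simpa [hcn, hc₀] using hea 3⟩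

theorem IsInducedMinorModel.not_isChordal {X : Fin 4 → Set V}
    (hX : G.IsInducedMinorModel (cycleGraph 4) X) : ¬ G.IsChordal := by
  classical
  have hex : ∃ m, ∃ c lab, G.IsNecklace (fun t => X ⟨t % 4, by omega⟩) m c lab :=
    hX.exists_isNecklace
  obtain ⟨c, lab, h⟩ := Nat.find_spec hex
  refine exists_isHole_iff_not_isChordal.1 ⟨_, c, h.isHole_of_minimal
    (fun m' hm' c' lab' h' => Nat.find_min hex hm' ⟨c', lab', h'⟩) (fun s hs t ht hst => ?_)
    (fun s hs u hu w hw huw => ?_)⟩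
  · exact hX.pairwise_disjoint fun h => hst (by simp only [Fin.ext_iff] at h; omega)
  · refine (hX.adj_iff ⟨s % 4, by omega⟩ ⟨(s + 2) % 4, by omega⟩
      (by simp only [ne_eq, Fin.ext_iff]; omega)).not.1 ?_ ⟨u, hu, w, hw, huw⟩
    rw [cycleGraph_adj_iff_cycAdj (by norm_num)]
    simp only [CycAdj]
    omega

theorem not_hasInducedMinor_wheelGraph_four_of_isChordal (hG : G.IsChordal) :
    ¬ G.HasInducedMinor (wheelGraph 4) := fun h =>
  let ⟨_, hX⟩ := hasInducedMinor_iff.1 h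
  (hX.comp (wheelGraph.rimEmbedding 4)).not_isChordal hG

end SimpleGraph

/-- A `3`-connected graph is `W₄`-induced-minor-free iff it is
chordal. -/
theorem threeConnected_w4_inducedMinorFree_iff_isChordal
    {V : Type} [Fintype V] (G : SimpleGraph V) (hG : G.IsKConnected 3) :
    ¬ G.HasInducedMinor (wheelGraph 4) ↔ G.IsChordal :=
  ⟨not_imp_comm.1 (hasInducedMinor_wheelGraph_four_of_not_isChordal hG),
    not_hasInducedMinor_wheelGraph_four_of_isChordal⟩
end

section
/- For every integer n ≥ 4, if G is the graph obtained from the complete graph K_n by subdividing every edge exactly once (replacing each edge by a path of length two through a new vertex), then the tree-independence number of G is at least ⌊n/2⌋. -/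
open SimpleGraph

/-! ## Common definitions -/

variable {V : Type} {W : Type}

/-- The graph obtained from the complete graph `K_n` by subdividing every edge exactly
once: branch vertices are the elements of `Fin n`, subdivision vertices are the
(non-diagonal) unordered pairs, and `i` is adjacent to `e` iff `i ∈ e`. -/
def subdividedComplete (n : ℕ) :
    SimpleGraph (Fin n ⊕ {e : Sym2 (Fin n) // ¬ e.IsDiag}) :=
  SimpleGraph.fromRel (fun a b =>
    ∃ (i : Fin n) (e : {e : Sym2 (Fin n) // ¬ e.IsDiag}),
      a = Sum.inl i ∧ b = Sum.inr e ∧ i ∈ e.1)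


/-! In a tree decomposition, the nodes whose bags meet a connected vertex set induce a subtree,
and pairwise intersecting subtrees of a tree have a common node (Helly property). The closed
neighbourhoods of the `n` branch vertices are connected and pairwise intersecting, so some bag `B`
meets all of them. Let `A` be the branch vertices in `B`, `S` the subdivision vertices in `B` and
`S₂ ⊆ S` those with no end in `A`. Both `S` and `A ∪ S₂` are independent, and every branch vertex
outside `A` is an end of some element of `S`, where an element of `S ∖ S₂` has at most one end
outside `A`; hence `n ≤ |A| + |S| + |S₂| ≤ 2 α(G[B])`. -/

open Finset

namespace SimpleGraph

section Tree

variable {ι : Type*} {T : SimpleGraph ι}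

lemma Walk.reachable_induce_of_support_subset {S : Set ι} {u v : ι} (p : T.Walk u v)
    (hp : ∀ x ∈ p.support, x ∈ S) (hu : u ∈ S) (hv : v ∈ S) :
    (T.induce S).Reachable ⟨u, hu⟩ ⟨v, hv⟩ :=
  (p.connected_induce_support.preconnected ⟨u, p.start_mem_support⟩
    ⟨v, p.end_mem_support⟩).map (T.induceHomOfLE hp).toHom

lemma IsTree.mem_of_mem_support_of_isPath (hT : T.IsTree) {S : Set ι}
    (hS : (T.induce S).Connected) {u v : ι} (hu : u ∈ S) (hv : v ∈ S) {p : T.Walk u v}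
    (hp : p.IsPath) {x : ι} (hx : x ∈ p.support) : x ∈ S := by
  classical
  obtain ⟨q⟩ := hS.preconnected ⟨u, hu⟩ ⟨v, hv⟩
  let q' : T.Walk u v := q.map (Embedding.induce S).toHom
  rw [(hT.existsUnique_path u v).unique hp q'.bypass_isPath] at hx
  obtain ⟨y, -, rfl⟩ := List.mem_map.mp (Walk.support_map _ q ▸ q'.support_bypass_subset_support hx)
  exact y.2

lemma IsTree.connected_induce_inter (hT : T.IsTree) {C₁ C₂ : Set ι}
    (h₁ : (T.induce C₁).Connected) (h₂ : (T.induce C₂).Connected) (h₁₂ : (C₁ ∩ C₂).Nonempty) :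
    (T.induce (C₁ ∩ C₂)).Connected := by
  have : Nonempty (C₁ ∩ C₂ : Set ι) := h₁₂.to_subtype
  refine ⟨fun u v => ?_⟩
  obtain ⟨p, hp, -⟩ := hT.existsUnique_path (u : ι) v
  exact p.reachable_induce_of_support_subset (S := C₁ ∩ C₂)
    (fun x hx => ⟨hT.mem_of_mem_support_of_isPath h₁ u.2.1 v.2.1 hp hx,
      hT.mem_of_mem_support_of_isPath h₂ u.2.2 v.2.2 hp hx⟩) u.2 v.2

/- The path `p` from `a ∈ C₁ ∩ C₂` to `c ∈ C₂ ∩ C₃` lies in `C₂`, and in `C₁ ∪ C₃` as the bypass of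
the walk through `b ∈ C₁ ∩ C₃`. Were there no common point, `p` would cross from `C₁ ∖ C₃` to
`C₃ ∖ C₁` along an edge `xy`; then `y` followed by the path from `x` to `b` inside `C₁` is the path
from `y` to `b`, which lies in `C₃` but passes through `x`. -/
lemma IsTree.inter_inter_nonempty (hT : T.IsTree) {C₁ C₂ C₃ : Set ι}
    (h₁ : (T.induce C₁).Connected) (h₂ : (T.induce C₂).Connected)
    (h₃ : (T.induce C₃).Connected) (h₁₂ : (C₁ ∩ C₂).Nonempty) (h₁₃ : (C₁ ∩ C₃).Nonempty)
    (h₂₃ : (C₂ ∩ C₃).Nonempty) : (C₁ ∩ C₂ ∩ C₃).Nonempty := by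
  classical
  obtain ⟨a, ha₁, ha₂⟩ := h₁₂
  obtain ⟨b, hb₁, hb₃⟩ := h₁₃
  obtain ⟨c, hc₂, hc₃⟩ := h₂₃
  by_cases ha₃ : a ∈ C₃
  · exact ⟨a, ⟨ha₁, ha₂⟩, ha₃⟩
  obtain ⟨p, hp, hp_unique⟩ := hT.existsUnique_path a c
  obtain ⟨q₁, hq₁, -⟩ := hT.existsUnique_path a b
  obtain ⟨q₂, hq₂, -⟩ := hT.existsUnique_path b c
  have hp₁₃ : ∀ x ∈ p.support, x ∈ C₁ ∨ x ∈ C₃ := by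
    intro x hx
    rw [← hp_unique _ (q₁.append q₂).bypass_isPath] at hx
    rcases (Walk.mem_support_append_iff _ _).mp
      ((q₁.append q₂).support_bypass_subset_support hx) with h | h
    · exact .inl (hT.mem_of_mem_support_of_isPath h₁ ha₁ hb₁ hq₁ h)
    · exact .inr (hT.mem_of_mem_support_of_isPath h₃ hb₃ hc₃ hq₂ h)
  obtain ⟨d, hd, hx₃, hy₃⟩ := p.exists_boundary_dart C₃ᶜ ha₃ (not_not.mpr hc₃)
  replace hy₃ : d.snd ∈ C₃ := not_not.mp hy₃
  have hy₂ := hT.mem_of_mem_support_of_isPath h₂ ha₂ hc₂ hp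
    (p.dart_snd_mem_support_of_mem_darts hd)
  by_cases hy₁ : d.snd ∈ C₁
  · exact ⟨d.snd, ⟨hy₁, hy₂⟩, hy₃⟩
  have hx₁ : d.fst ∈ C₁ := (hp₁₃ _ (p.dart_fst_mem_support_of_mem_darts hd)).resolve_right hx₃
  obtain ⟨q, hq, -⟩ := hT.existsUnique_path d.fst b
  have hyq : d.snd ∉ q.support := fun h => hy₁ (hT.mem_of_mem_support_of_isPath h₁ hx₁ hb₁ hq h)
  exact (hx₃ (hT.mem_of_mem_support_of_isPath h₃ hy₃ hb₃ (hq.cons hyq (h := d.adj.symm))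
    (List.mem_cons_of_mem _ q.start_mem_support))).elim

theorem IsTree.iInter_nonempty (hT : T.IsTree) {k : ℕ} (C : Fin k → Set ι)
    (hC : ∀ i, (T.induce (C i)).Connected) (hpair : ∀ i j, (C i ∩ C j).Nonempty) :
    (⋂ i, C i).Nonempty := by
  induction k with
  | zero => exact ⟨hT.connected.nonempty.some, by simp⟩
  | succ k ih =>
    rcases k with _ | k
    · obtain ⟨x, hx, -⟩ := hpair 0 0
      exact ⟨x, Set.mem_iInter.mpr fun i => Fin.fin_one_eq_zero i ▸ hx⟩
    obtain ⟨x, hx⟩ := ih (fun i => C i.castSucc ∩ C (Fin.last _))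
      (fun i => hT.connected_induce_inter (hC _) (hC _) (hpair _ _))
      (fun i j => by
        obtain ⟨x, ⟨hi, hj⟩, hl⟩ := hT.inter_inter_nonempty (hC i.castSucc) (hC j.castSucc)
          (hC (Fin.last _)) (hpair _ _) (hpair _ _) (hpair _ _)
        exact ⟨x, ⟨hi, hl⟩, hj, hl⟩)
    rw [Set.mem_iInter] at hx
    refine ⟨x, Set.mem_iInter.mpr fun i => ?_⟩
    induction i using Fin.lastCases with
    | last => exact (hx 0).2
    | cast j => exact (hx j).1

end Tree

lemma card_le_indepNumOn [Fintype V] {G : SimpleGraph V} {A : Set V} {s : Finset V}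
    (hs : G.IsIndepSet s) (hsA : ↑s ⊆ A) : #s ≤ G.indepNumOn A :=
  le_csSup ⟨Fintype.card V, by rintro _ ⟨s', -, -, rfl⟩; exact s'.card_le_univ⟩
    ⟨s, hsA, fun _ hu _ hv huv => hs hu hv huv, rfl⟩

lemma connected_induce_insert_neighborSet (G : SimpleGraph V) (v : V) :
    (G.induce (insert v (G.neighborSet v))).Connected := by
  rw [connected_iff_exists_forall_reachable]
  refine ⟨⟨v, Set.mem_insert _ _⟩, ?_⟩
  rintro ⟨w, rfl | hw⟩
  · rfl
  · exact Adj.reachable (G := G.induce _) hw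

namespace TreeDecomp

variable {G : SimpleGraph V} (D : G.TreeDecomp)

def meetingNodes (X : Set V) : Set D.ι := {t | (D.bag t ∩ X).Nonempty}

lemma reachable_induce_meetingNodes_of_mem_bag {X : Set V} {v : V} (hv : v ∈ X) {s t : D.ι}
    (hs : v ∈ D.bag s) (ht : v ∈ D.bag t) :
    (D.tree.induce (D.meetingNodes X)).Reachable ⟨s, v, hs, hv⟩ ⟨t, v, ht, hv⟩ :=
  ((D.bags_connected v).preconnected ⟨s, hs⟩ ⟨t, ht⟩).map
    (D.tree.induceHomOfLE (show {r | v ∈ D.bag r} ⊆ D.meetingNodes X from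
      fun _ hr => ⟨v, hr, hv⟩)).toHom

lemma reachable_induce_meetingNodes_of_walk {X : Set V} {u v : X} (p : (G.induce X).Walk u v)
    {s t : D.ι} (hs : ↑u ∈ D.bag s) (ht : ↑v ∈ D.bag t) :
    (D.tree.induce (D.meetingNodes X)).Reachable ⟨s, u, hs, u.2⟩ ⟨t, v, ht, v.2⟩ := by
  induction p generalizing s with
  | @nil w => exact D.reachable_induce_meetingNodes_of_mem_bag w.2 hs ht
  | @cons a b c h p ih =>
    obtain ⟨r, hr, hr'⟩ := D.bags_cover_edges h
    exact (D.reachable_induce_meetingNodes_of_mem_bag a.2 hs hr).trans (ih hr' ht)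

theorem connected_induce_meetingNodes {X : Set V} (hX : (G.induce X).Connected) :
    (D.tree.induce (D.meetingNodes X)).Connected := by
  obtain ⟨⟨u, hu⟩⟩ := hX.nonempty
  obtain ⟨s, hs⟩ := D.bags_cover_vertices u
  have : Nonempty (D.meetingNodes X) := ⟨⟨s, u, hs, hu⟩⟩
  refine ⟨fun ⟨s, x, hxs, hx⟩ ⟨t, y, hyt, hy⟩ => ?_⟩
  obtain ⟨p⟩ := hX.preconnected ⟨x, hx⟩ ⟨y, hy⟩
  exact D.reachable_induce_meetingNodes_of_walk p hxs hyt

theorem exists_bag_inter_nonempty {k : ℕ} (X : Fin k → Set V)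
    (hX : ∀ i, (G.induce (X i)).Connected) (hpair : ∀ i j, (X i ∩ X j).Nonempty) :
    ∃ t, ∀ i, (D.bag t ∩ X i).Nonempty := by
  obtain ⟨t, ht⟩ := D.isTree.iInter_nonempty (fun i => D.meetingNodes (X i))
    (fun i => D.connected_induce_meetingNodes (hX i)) fun i j => by
      obtain ⟨v, hvi, hvj⟩ := hpair i j
      obtain ⟨t, ht⟩ := D.bags_cover_vertices v
      exact ⟨t, ⟨v, ht, hvi⟩, v, ht, hvj⟩
  exact ⟨t, Set.mem_iInter.mp ht⟩

lemma indepNumOn_bag_le_indepNum (t : D.ι) : (G.indepNumOn (D.bag t) : ℕ∞) ≤ D.indepNum :=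
  le_iSup (fun t => (G.indepNumOn (D.bag t) : ℕ∞)) t

end TreeDecomp

end SimpleGraph

lemma Sym2.card_toFinset_sdiff_le {α : Type*} [DecidableEq α] (z : Sym2 α) (A : Finset α) :
    #(z.toFinset \ A) ≤ 1 + if Disjoint z.toFinset A then 1 else 0 := by
  have hz : #z.toFinset ≤ 2 := by rw [Sym2.card_toFinset]; split_ifs <;> omega
  split_ifs with h
  · exact (card_le_card sdiff_subset).trans hz
  · obtain ⟨i, hiz, hiA⟩ := not_disjoint_iff.mp h
    have : 1 ≤ #(A ∩ z.toFinset) := card_pos.mpr ⟨i, mem_inter.mpr ⟨hiA, hiz⟩⟩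
    rw [card_sdiff]
    omega

section subdividedComplete

variable {n : ℕ}

@[simp] lemma subdividedComplete_adj_inl_inr {i : Fin n} {e : {e : Sym2 (Fin n) // ¬ e.IsDiag}} :
    (subdividedComplete n).Adj (.inl i) (.inr e) ↔ i ∈ e.1 := by
  simp [subdividedComplete, Subtype.ext_iff, e.2]

@[simp] lemma subdividedComplete_adj_inr_inl {i : Fin n} {e : {e : Sym2 (Fin n) // ¬ e.IsDiag}} :
    (subdividedComplete n).Adj (.inr e) (.inl i) ↔ i ∈ e.1 := by
  rw [adj_comm, subdividedComplete_adj_inl_inr]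

@[simp] lemma subdividedComplete_not_adj_inl_inl {i j : Fin n} :
    ¬ (subdividedComplete n).Adj (.inl i) (.inl j) := by
  simp [subdividedComplete]

@[simp] lemma subdividedComplete_not_adj_inr_inr {e f : {e : Sym2 (Fin n) // ¬ e.IsDiag}} :
    ¬ (subdividedComplete n).Adj (.inr e) (.inr f) := by
  simp [subdividedComplete]

lemma subdividedComplete_isIndepSet_disjSum {A : Finset (Fin n)}
    {S : Finset {e : Sym2 (Fin n) // ¬ e.IsDiag}} (hAS : ∀ e ∈ S, Disjoint e.1.toFinset A) :
    (subdividedComplete n).IsIndepSet (A.disjSum S : Set (Fin n ⊕ _)) := by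
  rintro (i | e) hx (j | f) hy -
  · exact subdividedComplete_not_adj_inl_inl
  · rw [subdividedComplete_adj_inl_inr]
    exact fun hi => disjoint_left.mp (hAS f (by simpa using hy)) (Sym2.mem_toFinset.mpr hi)
      (by simpa using hx)
  · rw [subdividedComplete_adj_inr_inl]
    exact fun hj => disjoint_left.mp (hAS e (by simpa using hx)) (Sym2.mem_toFinset.mpr hj)
      (by simpa using hy)
  · exact subdividedComplete_not_adj_inr_inr

theorem subdividedComplete_le_two_mul_indepNumOn
    {B : Set (Fin n ⊕ {e : Sym2 (Fin n) // ¬ e.IsDiag})}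
    (hB : ∀ i, (B ∩ insert (.inl i) ((subdividedComplete n).neighborSet (.inl i))).Nonempty) :
    n ≤ 2 * (subdividedComplete n).indepNumOn B := by
  classical
  set A : Finset (Fin n) := {i | .inl i ∈ B}
  set S : Finset {e : Sym2 (Fin n) // ¬ e.IsDiag} := {e | .inr e ∈ B}
  set S₂ := {e ∈ S | Disjoint e.1.toFinset A}
  have hcover : Aᶜ ⊆ S.biUnion fun e => e.1.toFinset \ A := by
    intro i hi
    have hiB : .inl i ∉ B := by simpa [A] using hi
    obtain ⟨v, hvB, rfl | hv⟩ := hB i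
    · exact (hiB hvB).elim
    obtain _ | e := v
    · exact (subdividedComplete_not_adj_inl_inl hv).elim
    exact mem_biUnion.mpr ⟨e, by simpa [S] using hvB,
      mem_sdiff.mpr ⟨Sym2.mem_toFinset.mpr (subdividedComplete_adj_inl_inr.mp hv), mem_compl.mp hi⟩⟩
  have hS : #S ≤ (subdividedComplete n).indepNumOn B := by
    simpa using card_le_indepNumOn (subdividedComplete_isIndepSet_disjSum (A := ∅) (S := S)
      fun e _ => disjoint_empty_right _) (by rintro (i | e) hx <;> simp_all [S])
  have hAS₂ : #A + #S₂ ≤ (subdividedComplete n).indepNumOn B := by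
    simpa using card_le_indepNumOn (subdividedComplete_isIndepSet_disjSum (A := A) (S := S₂)
      fun e he => (mem_filter.mp he).2) (by rintro (i | e) hx <;> simp_all [S₂, S, A])
  calc n = #A + #Aᶜ := by rw [card_add_card_compl, Fintype.card_fin]
    _ ≤ #A + ∑ e ∈ S, #(e.1.toFinset \ A) :=
      Nat.add_le_add_left ((card_le_card hcover).trans card_biUnion_le) _
    _ ≤ #A + ∑ e ∈ S, (1 + if Disjoint e.1.toFinset A then 1 else 0) :=
      Nat.add_le_add_left (sum_le_sum fun e _ => e.1.card_toFinset_sdiff_le A) _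
    _ = #S + (#A + #S₂) := by
      rw [sum_add_distrib, ← card_filter, sum_const, smul_eq_mul, mul_one]
      exact Nat.add_left_comm _ _ _
    _ ≤ 2 * (subdividedComplete n).indepNumOn B := by omega

end subdividedComplete

theorem floor_half_le_treeIndepNum_subdividedComplete_general (n : ℕ) :
    ((n / 2 : ℕ) : ℕ∞) ≤ (subdividedComplete n).treeIndepNum := by
  refine le_iInf fun D => ?_
  obtain ⟨t, ht⟩ := D.exists_bag_inter_nonempty
    (fun i => insert (.inl i) ((subdividedComplete n).neighborSet (.inl i)))
    (fun i => connected_induce_insert_neighborSet _ _) fun i j => by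
      by_cases hij : i = j
      · exact ⟨.inl i, Set.mem_insert _ _, hij ▸ Set.mem_insert _ _⟩
      · refine ⟨.inr ⟨s(i, j), by simpa using hij⟩, Or.inr ?_, Or.inr ?_⟩ <;> simp
  calc ((n / 2 : ℕ) : ℕ∞) ≤ (subdividedComplete n).indepNumOn (D.bag t) := by
        exact_mod_cast Nat.div_le_of_le_mul (subdividedComplete_le_two_mul_indepNumOn ht)
    _ ≤ D.indepNum := D.indepNumOn_bag_le_indepNum t

/-- For every `n ≥ 4`, the graph obtained from `K_n` by subdividing
every edge once has tree-independence number at least `⌊n/2⌋`. -/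
theorem floor_half_le_treeIndepNum_subdividedComplete (n : ℕ) (hn : 4 ≤ n) :
    ((n / 2 : ℕ) : ℕ∞) ≤ (subdividedComplete n).treeIndepNum :=
  floor_half_le_treeIndepNum_subdividedComplete_general n
end
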